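/- Let m ≥ 2, r_1,…,r_m ∈ ℝ^n, w_1,…,w_m ∈ ℝ, d_1,…,d_m > 0. Define p_{0j} = max_i(r_{ji}+w_i), q_{0j} = min_i(r_{ji}−w_i), λ₀ = max_j(p_{0j}−q_{0j})/2, p_{1j} = max_i(r_{ji}−d_i), q_{1j} = min_i(r_{ji}+d_i), and set p_j = max(p_{0j} − λ₀, p_{1j}), q_j = min(q_{0j} + λ₀, q_{1j}), λ = max_j(p_j − q_j)/2. Assume λ ≤ 0 (so the unconstrained optimum is achievable within the constraints). Then min over x ∈ S of max_i(ρ(r_i,x)+w_i) equals λ₀, where S = {x : ρ(r_i,x) ≤ d_i for all i}, and this minimum is attained at any x with x_j = α_j(p_j − λ) + (1−α_j)(q_j + λ), α_j ∈ [0,1]. -/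
import Mathlib


/-- Chebyshev (L∞) distance on ℝ^n. -/
noncomputable def cheb {n : ℕ} (hn : 0 < n) (r x : Fin n → ℝ) : ℝ :=
  Finset.univ.sup' (Finset.univ_nonempty_iff.mpr ⟨⟨0, hn⟩⟩) fun j => |r j - x j|

lemma le_cheb {n : ℕ} (hn : 0 < n) (r x : Fin n → ℝ) (j : Fin n) :
    |r j - x j| ≤ cheb hn r x := by
  unfold cheb; exact Finset.le_sup' (fun j => |r j - x j|) (Finset.mem_univ j)

theorem constrained_location_solution {n m : ℕ} (hn : 0 < n) (hm : 2 ≤ m)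
    (r : Fin m → Fin n → ℝ) (w : Fin m → ℝ) (d : Fin m → ℝ) (hd : ∀ i, 0 < d i)
    (p₀ q₀ p₁ q₁ p q : Fin n → ℝ) (lam₀ lam : ℝ)
    (hp₀ : ∀ j, p₀ j = Finset.univ.sup' (Finset.univ_nonempty_iff.mpr ⟨⟨0, by omega⟩⟩)
      (fun i => r i j + w i))
    (hq₀ : ∀ j, q₀ j = Finset.univ.inf' (Finset.univ_nonempty_iff.mpr ⟨⟨0, by omega⟩⟩)
      (fun i => r i j - w i))
    (hlam₀ : lam₀ = Finset.univ.sup' (Finset.univ_nonempty_iff.mpr ⟨⟨0, hn⟩⟩)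
      (fun j => (p₀ j - q₀ j) / 2))
    (hp₁ : ∀ j, p₁ j = Finset.univ.sup' (Finset.univ_nonempty_iff.mpr ⟨⟨0, by omega⟩⟩)
      (fun i => r i j - d i))
    (hq₁ : ∀ j, q₁ j = Finset.univ.inf' (Finset.univ_nonempty_iff.mpr ⟨⟨0, by omega⟩⟩)
      (fun i => r i j + d i))
    (hp : ∀ j, p j = max (p₀ j - lam₀) (p₁ j))
    (hq : ∀ j, q j = min (q₀ j + lam₀) (q₁ j))
    (hlam : lam = Finset.univ.sup' (Finset.univ_nonempty_iff.mpr ⟨⟨0, hn⟩⟩)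
      (fun j => (p j - q j) / 2))
    (hneg : lam ≤ 0) :
    (∀ x : Fin n → ℝ, (∀ i, cheb hn (r i) x ≤ d i) →
      lam₀ ≤ Finset.univ.sup' (Finset.univ_nonempty_iff.mpr ⟨⟨0, by omega⟩⟩)
        (fun i => cheb hn (r i) x + w i)) ∧
    (∀ α : Fin n → ℝ, (∀ j, α j ∈ Set.Icc (0 : ℝ) 1) →
      (∀ i, cheb hn (r i) (fun j => α j * (p j - lam) + (1 - α j) * (q j + lam)) ≤ d i) ∧
      (Finset.univ.sup' (Finset.univ_nonempty_iff.mpr ⟨⟨0, by omega⟩⟩)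
        (fun i => cheb hn (r i)
          (fun j => α j * (p j - lam) + (1 - α j) * (q j + lam)) + w i)) = lam₀) := by
  have mne : (Finset.univ : Finset (Fin m)).Nonempty := ⟨⟨0, by omega⟩, Finset.mem_univ _⟩
  -- Part 1 holds for all x
  have part1 : ∀ x : Fin n → ℝ,
      lam₀ ≤ Finset.univ.sup' mne (fun i => cheb hn (r i) x + w i) := by
    intro x
    rw [hlam₀]
    apply Finset.sup'_le
    intro j _
    obtain ⟨a, _, ha⟩ := Finset.exists_mem_eq_sup' mne (fun i => r i j + w i)
    obtain ⟨b, _, hb⟩ := Finset.exists_mem_eq_inf' mne (fun i => r i j - w i)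
    have h1 : r a j - x j ≤ cheb hn (r a) x :=
      le_trans (le_abs_self _) (le_cheb hn (r a) x j)
    have h2 : x j - r b j ≤ cheb hn (r b) x := by
      refine le_trans ?_ (le_cheb hn (r b) x j)
      rw [abs_sub_comm]; exact le_abs_self _
    have hA : cheb hn (r a) x + w a ≤
        Finset.univ.sup' mne (fun i => cheb hn (r i) x + w i) :=
      Finset.le_sup' (fun i => cheb hn (r i) x + w i) (Finset.mem_univ a)
    have hB : cheb hn (r b) x + w b ≤
        Finset.univ.sup' mne (fun i => cheb hn (r i) x + w i) :=
      Finset.le_sup' (fun i => cheb hn (r i) x + w i) (Finset.mem_univ b)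
    have hpj := hp₀ j
    have hqj := hq₀ j
    rw [ha] at hpj; rw [hb] at hqj
    linarith
  refine ⟨fun x _ => part1 x, fun α hα => ?_⟩
  set x : Fin n → ℝ := fun j => α j * (p j - lam) + (1 - α j) * (q j + lam) with hxdef
  have hxbound : ∀ j, p j ≤ x j ∧ x j ≤ q j := by
    intro j
    have hpq : (p j - q j) / 2 ≤ lam := by
      rw [hlam]; exact Finset.le_sup' (fun j => (p j - q j) / 2) (Finset.mem_univ j)
    obtain ⟨h0, h1⟩ := hα j
    constructor <;> · simp only [hxdef]; nlinarith
  have hfeas : ∀ i, cheb hn (r i) x ≤ d i := by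
    intro i
    apply Finset.sup'_le
    intro j _
    rw [abs_le]
    have h1 : r i j - d i ≤ p₁ j := by
      rw [hp₁ j]; exact Finset.le_sup' (fun i => r i j - d i) (Finset.mem_univ i)
    have h2 : q₁ j ≤ r i j + d i := by
      rw [hq₁ j]; exact Finset.inf'_le (fun i => r i j + d i) (Finset.mem_univ i)
    have h3 : p₁ j ≤ p j := by rw [hp j]; exact le_max_right _ _
    have h4 : q j ≤ q₁ j := by rw [hq j]; exact min_le_right _ _
    obtain ⟨h5, h6⟩ := hxbound j
    constructor <;> linarith
  refine ⟨hfeas, le_antisymm ?_ (part1 x)⟩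
  apply Finset.sup'_le
  intro i _
  have hch : cheb hn (r i) x ≤ lam₀ - w i := by
    apply Finset.sup'_le
    intro j _
    rw [abs_le]
    have h1 : r i j + w i ≤ p₀ j := by
      rw [hp₀ j]; exact Finset.le_sup' (fun i => r i j + w i) (Finset.mem_univ i)
    have h2 : q₀ j ≤ r i j - w i := by
      rw [hq₀ j]; exact Finset.inf'_le (fun i => r i j - w i) (Finset.mem_univ i)
    have h3 : p₀ j - lam₀ ≤ p j := by rw [hp j]; exact le_max_left _ _
    have h4 : q j ≤ q₀ j + lam₀ := by rw [hq j]; exact min_le_left _ _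
    obtain ⟨h5, h6⟩ := hxbound j
    constructor <;> linarith
  linarith
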